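/- Let σ : ℝ² → ℝ³ be a C² parametrized surface with σ_u, σ_v linearly independent everywhere, unit normal n = (σ_u × σ_v)/‖σ_u × σ_v‖, frame matrix Σ with columns σ_u, σ_v, n, and Weingarten matrix W defined by n_u = a σ_u + b σ_v, n_v = c σ_u + d σ_v, W = [[a,c],[b,d]]. Assume the map (u,v) ↦ W(u,v) is Lipschitz, that −W(u,v) has only nonnegative eigenvalues for all (u,v), and that c : ℝ → ℝ³ is continuously differentiable. Then for any initial condition (u₀, v₀, r₀) with r₀ > 0, the initial value problem (u̇, v̇, ṙ)ᵀ = diag((I − rW(u,v))⁻¹, −1) Σ(u,v)⁻¹ ċ(t), (u,v,r)(0) = (u₀,v₀,r₀), has a solution on some open time interval containing 0, and this solution is locally unique. -/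

import Mathlib

/-- The cross product on `EuclideanSpace ℝ (Fin 3)`. -/
noncomputable def cross3 (a b : EuclideanSpace ℝ (Fin 3)) : EuclideanSpace ℝ (Fin 3) :=
  (EuclideanSpace.equiv (Fin 3) ℝ).symm
    (crossProduct ((EuclideanSpace.equiv (Fin 3) ℝ) a) ((EuclideanSpace.equiv (Fin 3) ℝ) b))

/-- The `3×3` matrix whose columns are `a`, `b`, `c`. -/
def frameMat (a b c : EuclideanSpace ℝ (Fin 3)) : Matrix (Fin 3) (Fin 3) ℝ :=
  Matrix.of fun i j => ![a i, b i, c i] j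

/-- The block-diagonal `3×3` matrix with upper-left `2×2` block `M` and `(3,3)` entry `−1`. -/
def blockDiag2 (M : Matrix (Fin 2) (Fin 2) ℝ) : Matrix (Fin 3) (Fin 3) ℝ :=
  Matrix.of ![![M 0 0, M 0 1, 0], ![M 1 0, M 1 1, 0], ![0, 0, -1]]

/-!
Write the right-hand side as `Φ(u, v, r) ċ(t)`. Near the initial point, `Φ` is a `C¹` function of
`(u, v, r)` and of the matrix `W(u, v)`: `σ_u`, `σ_v`, `n` are `C¹`, `det Σ = ‖σ_u × σ_v‖ ≠ 0`, and
`det (I - r₀ W) ≠ 0` because `1 / r₀ > 0` is not an eigenvalue of `W`. Composed with the Lipschitz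
map `(u, v, r) ↦ ((u, v, r), W(u, v))`, `Φ` is Lipschitz on a ball around the initial point, and
Picard–Lindelöf applies there. For uniqueness among all solutions, the bound on the field in the
ball keeps every solution inside it for short times, where Grönwall's estimate applies.
-/

open Set Metric Filter Topology NNReal Matrix

-- The `ℓ∞`-operator norm makes matrices a normed algebra with `‖A *ᵥ v‖ ≤ ‖A‖ * ‖v‖` for sup norms.
attribute [local instance] Matrix.linftyOpNormedAddCommGroup Matrix.linftyOpNormedSpace
  Matrix.linftyOpNormedRing Matrix.linftyOpNormedAlgebra

theorem cross3_apply (a b : EuclideanSpace ℝ (Fin 3)) (i : Fin 3) :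
    cross3 a b i = ![a 1 * b 2 - a 2 * b 1, a 2 * b 0 - a 0 * b 2, a 0 * b 1 - a 1 * b 0] i := by
  simp [cross3, crossProduct]

theorem cross3_ne_zero {a b : EuclideanSpace ℝ (Fin 3)} (h : LinearIndependent ℝ ![a, b]) :
    cross3 a b ≠ 0 := by
  let e := EuclideanSpace.equiv (Fin 3) ℝ
  have he := h.map' e.toLinearEquiv.toLinearMap e.toLinearEquiv.ker
  rw [← FinVec.map_eq] at he
  have hcross : e a ⨯₃ e b ≠ 0 := crossProduct_ne_zero_iff_linearIndependent.mpr he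
  simpa [cross3] using hcross

theorem det_frameMat (a b c : EuclideanSpace ℝ (Fin 3)) :
    (frameMat a b c).det = c ⬝ᵥ (a ⨯₃ b) := by
  rw [← Matrix.det_transpose, triple_product_permutation, triple_product_eq_det]
  congr 1
  ext i j
  fin_cases i <;> fin_cases j <;> rfl

theorem det_frameMat_normalize_cross3 (a b : EuclideanSpace ℝ (Fin 3)) :
    (frameMat a b (‖cross3 a b‖⁻¹ • cross3 a b)).det = ‖cross3 a b‖ := by
  have hsq : ‖cross3 a b‖ ^ 2 = (a ⨯₃ b) ⬝ᵥ (a ⨯₃ b) := by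
    rw [EuclideanSpace.norm_sq_eq]
    simp [cross3, dotProduct, sq]
    rfl
  rw [det_frameMat, WithLp.ofLp_smul, smul_dotProduct, smul_eq_mul]
  change ‖cross3 a b‖⁻¹ * ((a ⨯₃ b) ⬝ᵥ (a ⨯₃ b)) = _
  rw [← hsq]
  rcases eq_or_ne ‖cross3 a b‖ 0 with h | h
  · simp [h]
  · field_simp

theorem det_one_sub_smul_ne_zero {A : Matrix (Fin 2) (Fin 2) ℝ} {r : ℝ} (hr : 0 < r)
    (hA : ∀ μ : ℝ, ∀ x : Fin 2 → ℝ, x ≠ 0 → (-A).mulVec x = μ • x → 0 ≤ μ) :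
    (1 - r • A).det ≠ 0 := by
  intro h
  obtain ⟨v, hv, hAv⟩ := Matrix.exists_mulVec_eq_zero_iff.mpr h
  rw [Matrix.sub_mulVec, Matrix.one_mulVec, Matrix.smul_mulVec, sub_eq_zero] at hAv
  have hAv' : (-A).mulVec v = (-r⁻¹) • v := by
    rw [Matrix.neg_mulVec, neg_smul, neg_inj, eq_inv_smul_iff₀ hr.ne', ← hAv]
  linarith [hA _ v hv hAv', inv_pos.mpr hr]

section Smoothness

variable {E : Type*} [NormedAddCommGroup E] [NormedSpace ℝ E] {x : E} {k : WithTop ℕ∞}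
  {m n : Type*} [Fintype m] [Fintype n]

theorem contDiffAt_matrix_iff {f : E → Matrix m n ℝ} :
    ContDiffAt ℝ k f x ↔ ∀ i j, ContDiffAt ℝ k (fun y => f y i j) x := by
  let e : Matrix m n ℝ ≃L[ℝ] (m → n → ℝ) :=
    (Matrix.ofLinearEquiv ℝ).symm.toContinuousLinearEquiv
  rw [← e.comp_contDiffAt_iff, contDiffAt_pi]
  refine forall_congr' fun i => ?_
  rw [contDiffAt_pi]
  rfl

theorem ContDiffAt.matrix_inv [DecidableEq n] {f : E → Matrix n n ℝ}
    (hf : ContDiffAt ℝ k f x) (hdet : (f x).det ≠ 0) :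
    ContDiffAt ℝ k (fun y => (f y)⁻¹) x := by
  have hunit : IsUnit (f x) := (Matrix.isUnit_iff_isUnit_det _).mpr hdet.isUnit
  simp_rw [Matrix.nonsing_inv_eq_ringInverse]
  exact (hunit.unit_spec ▸ contDiffAt_ringInverse ℝ hunit.unit).comp x hf

theorem ContDiffAt.blockDiag2 {f : E → Matrix (Fin 2) (Fin 2) ℝ} (hf : ContDiffAt ℝ k f x) :
    ContDiffAt ℝ k (fun y => blockDiag2 (f y)) x := by
  rw [contDiffAt_matrix_iff] at hf ⊢
  intro i j
  fin_cases i <;> fin_cases j <;> simp [_root_.blockDiag2, hf, contDiffAt_const]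

theorem ContDiffAt.frameMat {a b c : E → EuclideanSpace ℝ (Fin 3)}
    (ha : ContDiffAt ℝ k a x) (hb : ContDiffAt ℝ k b x) (hc : ContDiffAt ℝ k c x) :
    ContDiffAt ℝ k (fun y => frameMat (a y) (b y) (c y)) x := by
  rw [contDiffAt_euclidean] at ha hb hc
  rw [contDiffAt_matrix_iff]
  intro i j
  fin_cases j <;> simp [_root_.frameMat, ha, hb, hc]

theorem ContDiff.cross3 {f g : E → EuclideanSpace ℝ (Fin 3)}
    (hf : ContDiff ℝ k f) (hg : ContDiff ℝ k g) :
    ContDiff ℝ k (fun x => cross3 (f x) (g x)) := by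
  rw [contDiff_euclidean] at hf hg ⊢
  intro i
  simp only [cross3_apply]
  fin_cases i <;> simp <;> fun_prop

theorem ContDiff.normalize_cross3 {f g : E → EuclideanSpace ℝ (Fin 3)}
    (hf : ContDiff ℝ k f) (hg : ContDiff ℝ k g) (hfg : ∀ x, LinearIndependent ℝ ![f x, g x]) :
    ContDiff ℝ k (fun x => ‖_root_.cross3 (f x) (g x)‖⁻¹ • _root_.cross3 (f x) (g x)) := by
  refine contDiff_iff_contDiffAt.2 fun x => ?_
  have hne := cross3_ne_zero (hfg x)
  have hfg' := (hf.cross3 hg).contDiffAt (x := x)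
  exact ((hfg'.norm ℝ hne).inv (norm_ne_zero_iff.mpr hne)).smul hfg'

end Smoothness

section PartialDerivatives

variable {F : Type*} [NormedAddCommGroup F] [NormedSpace ℝ F] {σ σ' : ℝ × ℝ → F}
  {m n : WithTop ℕ∞}

theorem contDiff_of_hasDerivAt_fst (hσ : ContDiff ℝ n σ) (hmn : m + 1 ≤ n)
    (hσ' : ∀ p : ℝ × ℝ, HasDerivAt (fun x => σ (x, p.2)) (σ' p) p.1) : ContDiff ℝ m σ' := by
  have : σ' = fun p => fderiv ℝ σ p (1, 0) := funext fun p =>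
    (hσ' p).unique <| ((hσ.differentiable (lt_of_lt_of_le (by simp) hmn).ne') p).hasFDerivAt
      |>.comp_hasDerivAt p.1 ((hasDerivAt_id p.1).prodMk (hasDerivAt_const p.1 p.2))
  exact this ▸ (hσ.fderiv_right hmn).clm_apply contDiff_const

theorem contDiff_of_hasDerivAt_snd (hσ : ContDiff ℝ n σ) (hmn : m + 1 ≤ n)
    (hσ' : ∀ p : ℝ × ℝ, HasDerivAt (fun y => σ (p.1, y)) (σ' p) p.2) : ContDiff ℝ m σ' := by
  have : σ' = fun p => fderiv ℝ σ p (0, 1) := funext fun p =>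
    (hσ' p).unique <| ((hσ.differentiable (lt_of_lt_of_le (by simp) hmn).ne') p).hasFDerivAt
      |>.comp_hasDerivAt p.2 ((hasDerivAt_const p.2 p.1).prodMk (hasDerivAt_id p.2))
  exact this ▸ (hσ.fderiv_right hmn).clm_apply contDiff_const

end PartialDerivatives

theorem exists_lipschitzOnWith_comp_prodMk {E F G : Type*} [NormedAddCommGroup E]
    [NormedSpace ℝ E] [NormedAddCommGroup F] [NormedSpace ℝ F] [NormedAddCommGroup G]
    [NormedSpace ℝ G] {g : E × F → G} {h : E → F} {K : ℝ≥0} {x₀ : E}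
    (hg : ContDiffAt ℝ 1 g (x₀, h x₀)) (hh : LipschitzWith K h) :
    ∃ K', ∃ U ∈ 𝓝 x₀, LipschitzOnWith K' (fun x => g (x, h x)) U := by
  obtain ⟨K', t, ht, hgt⟩ := hg.exists_lipschitzOnWith
  have hH : LipschitzWith (max 1 K) fun x => (x, h x) := LipschitzWith.id.prodMk hh
  exact ⟨_, _, hH.continuous.continuousAt.preimage_mem_nhds ht,
    hgt.comp hH.lipschitzOnWith (mapsTo_preimage _ t)⟩

theorem lipschitzWith_ofSymm_of_abs_sub_le {X m n : Type*} [PseudoMetricSpace X] [Fintype m]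
    [Fintype n] {W : X → Matrix m n ℝ} {L : ℝ}
    (hW : ∀ p q, ∀ i j, |W p i j - W q i j| ≤ L * dist p q) :
    LipschitzWith L.toNNReal fun p => Matrix.of.symm (W p) := by
  refine LipschitzWith.of_dist_le_mul fun p q => ?_
  refine dist_pi_le_iff (by positivity) |>.2 fun i =>
    dist_pi_le_iff (by positivity) |>.2 fun j => ?_
  calc dist (W p i j) (W q i j) ≤ L * dist p q := (Real.dist_eq _ _).trans_le (hW p q i j)
    _ ≤ L.toNNReal * dist p q := by gcongr; exact Real.le_coe_toNNReal L

section ODE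

variable {E : Type*} [NormedAddCommGroup E] [NormedSpace ℝ E]
  {F : ℝ → E → E} {f : ℝ → E} {x₀ : E} {C R ε : ℝ}

theorem mem_closedBall_of_hasDerivAt_of_norm_le_right (hC : 0 ≤ C) (hε : 0 < ε)
    (hεC : ε * C < R) (hF : ∀ t ∈ Ico 0 ε, ∀ x ∈ closedBall x₀ R, ‖F t x‖ ≤ C)
    (hf₀ : f 0 = x₀) (hf : ∀ t ∈ Ico 0 ε, HasDerivAt f (F t (f t)) t) :
    ∀ t ∈ Ico 0 ε, f t ∈ closedBall x₀ R := by
  have hfence_le : ∀ t ∈ Ico 0 ε, R / ε * t ≤ R := fun t ht => by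
    rw [div_mul_eq_mul_div, div_le_iff₀ hε]
    exact mul_le_mul_of_nonneg_left ht.2.le (by nlinarith)
  intro T hT
  have hsub : Icc 0 T ⊆ Ico 0 ε := Icc_subset_Ico_right hT.2
  -- `f` cannot catch up with the fence `t ↦ (R / ε) t`, which grows faster than `C`
  have hfence : ∀ t ∈ Icc 0 T, ‖f t - x₀‖ ≤ R / ε * t := by
    refine image_norm_le_of_norm_deriv_right_lt_deriv_boundary'
      (fun t ht => ((hf t (hsub ht)).sub_const x₀).continuousAt.continuousWithinAt)
      (fun t ht => ((hf t (hsub (Ico_subset_Icc_self ht))).sub_const x₀).hasDerivWithinAt)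
      (by simp [hf₀]) (continuousOn_const.mul continuousOn_id)
      (fun t _ => ((hasDerivAt_id t).const_mul (R / ε)).hasDerivWithinAt) ?_
    intro t ht hft
    have ht' := hsub (Ico_subset_Icc_self ht)
    have hmem : f t ∈ closedBall x₀ R := by
      rw [mem_closedBall, dist_eq_norm, hft]; exact hfence_le t ht'
    calc ‖F t (f t)‖ ≤ C := hF t ht' _ hmem
      _ < R / ε * 1 := by rw [mul_one, lt_div_iff₀ hε]; linarith
  rw [mem_closedBall, dist_eq_norm]
  exact (hfence T ⟨hT.1, le_rfl⟩).trans (hfence_le T hT)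

theorem mem_closedBall_of_hasDerivAt_of_norm_le (hC : 0 ≤ C) (hε : 0 < ε)
    (hεC : ε * C < R) (hF : ∀ t ∈ Ioo (-ε) ε, ∀ x ∈ closedBall x₀ R, ‖F t x‖ ≤ C)
    (hf₀ : f 0 = x₀) (hf : ∀ t ∈ Ioo (-ε) ε, HasDerivAt f (F t (f t)) t) :
    ∀ t ∈ Ioo (-ε) ε, f t ∈ closedBall x₀ R := by
  have hIco : Ico 0 ε ⊆ Ioo (-ε) ε := fun t ht => ⟨by linarith [ht.1], ht.2⟩
  have hneg : ∀ t ∈ Ico 0 ε, -t ∈ Ioo (-ε) ε := fun t ht =>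
    ⟨by linarith [ht.2], by linarith [ht.1]⟩
  have hright := mem_closedBall_of_hasDerivAt_of_norm_le_right hC hε hεC
    (fun t ht => hF t (hIco ht)) hf₀ (fun t ht => hf t (hIco ht))
  have hleft := mem_closedBall_of_hasDerivAt_of_norm_le_right (F := fun s x => -F (-s) x)
    (f := fun s => f (-s)) hC hε hεC
    (fun t ht x hx => by simpa using hF (-t) (hneg t ht) x hx) (by simpa using hf₀)
    (fun t ht => by
      simpa [Function.comp_def] using (hf (-t) (hneg t ht)).scomp t (hasDerivAt_neg t))
  intro t ht
  rcases le_or_gt 0 t with h | h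
  · exact hright t ⟨h, ht.2⟩
  · simpa using hleft (-t) ⟨by linarith, by linarith [ht.1]⟩

theorem exists_pos_hasDerivAt_and_eqOn_of_lipschitzOnWith [CompleteSpace E]
    {T : ℝ} {R C K : ℝ≥0} (hT : 0 < T) (hR : 0 < R)
    (hlip : ∀ t ∈ Icc (-T) T, LipschitzOnWith K (F t) (closedBall x₀ R))
    (hcont : ∀ x ∈ closedBall x₀ R, ContinuousOn (F · x) (Icc (-T) T))
    (hbound : ∀ t ∈ Icc (-T) T, ∀ x ∈ closedBall x₀ R, ‖F t x‖ ≤ C) :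
    ∃ ε > (0 : ℝ),
      (∃ f : ℝ → E, f 0 = x₀ ∧ ∀ t ∈ Ioo (-ε) ε, HasDerivAt f (F t (f t)) t) ∧
      ∀ f g : ℝ → E, f 0 = x₀ → g 0 = x₀ →
        (∀ t ∈ Ioo (-ε) ε, HasDerivAt f (F t (f t)) t) →
        (∀ t ∈ Ioo (-ε) ε, HasDerivAt g (F t (g t)) t) →
        EqOn f g (Ioo (-ε) ε) := by
  set ε : ℝ := min T (R / (C + 1))
  have hε : 0 < ε := lt_min hT (by positivity)
  have hεT : Icc (-ε) ε ⊆ Icc (-T) T := Icc_subset_Icc (by simp [ε]) (min_le_left _ _)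
  have hεC : ε * C < R := by
    calc ε * C ≤ R / (C + 1) * C := by gcongr; exact min_le_right _ _
      _ < R := by rw [div_mul_eq_mul_div, div_lt_iff₀ (by positivity)]; nlinarith
  have hpl : IsPicardLindelof F (tmin := -ε) (tmax := ε) ⟨0, by simp [hε.le]⟩ x₀ R 0 C K :=
    { lipschitzOnWith := fun t ht => hlip t (hεT ht)
      continuousOn := fun x hx => (hcont x hx).mono hεT
      norm_le := fun t ht => hbound t (hεT ht)
      mul_max_le := by simpa [mul_comm] using hεC.le }
  refine ⟨ε, hε, ?_, fun f g hf₀ hg₀ hf hg => ?_⟩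
  · obtain ⟨f, hf₀, hf⟩ := hpl.exists_eq_forall_mem_Icc_hasDerivWithinAt₀
    exact ⟨f, hf₀, fun t ht =>
      (hf t (Ioo_subset_Icc_self ht)).hasDerivAt (Icc_mem_nhds ht.1 ht.2)⟩
  · have hbound' : ∀ t ∈ Ioo (-ε) ε, ∀ x ∈ closedBall x₀ R, ‖F t x‖ ≤ C :=
      fun t ht => hbound t (hεT (Ioo_subset_Icc_self ht))
    have hfR := mem_closedBall_of_hasDerivAt_of_norm_le C.2 hε hεC hbound' hf₀ hf
    have hgR := mem_closedBall_of_hasDerivAt_of_norm_le C.2 hε hεC hbound' hg₀ hg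
    exact ODE_solution_unique_of_mem_Ioo (fun t ht => hlip t (hεT (Ioo_subset_Icc_self ht)))
      (by simp [hε]) (fun t ht => ⟨hf t ht, hfR t ht⟩) (fun t ht => ⟨hg t ht, hgR t ht⟩)
      (hf₀.trans hg₀.symm)

end ODE

theorem exists_pos_hasDerivAt_and_eqOn_of_mulVec {m n : Type*} [Fintype m] [Fintype n]
    {F : ℝ → (n → ℝ) → (n → ℝ)} {Φ : (n → ℝ) → Matrix n m ℝ} {w : ℝ → m → ℝ} {x₀ : n → ℝ}
    (hΦ : ∃ K, ∃ U ∈ 𝓝 x₀, LipschitzOnWith K Φ U) (hw : Continuous w)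
    (hF : ∀ t x, F t x = Φ x *ᵥ w t) :
    ∃ ε > (0 : ℝ),
      (∃ f : ℝ → n → ℝ, f 0 = x₀ ∧ ∀ t ∈ Ioo (-ε) ε, HasDerivAt f (F t (f t)) t) ∧
      ∀ f g : ℝ → n → ℝ, f 0 = x₀ → g 0 = x₀ →
        (∀ t ∈ Ioo (-ε) ε, HasDerivAt f (F t (f t)) t) →
        (∀ t ∈ Ioo (-ε) ε, HasDerivAt g (F t (g t)) t) →
        EqOn f g (Ioo (-ε) ε) := by
  obtain ⟨K, U, hU, hΦU⟩ := hΦ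
  obtain ⟨R, hR, hRU⟩ := nhds_basis_closedBall.mem_iff.1 hU
  obtain ⟨Cw, hCw⟩ :=
    (isCompact_Icc (a := (-1 : ℝ)) (b := 1)).exists_bound_of_continuousOn hw.continuousOn
  have hΦR : LipschitzOnWith K Φ (closedBall x₀ R) := hΦU.mono hRU
  have hΦbound : ∀ x ∈ closedBall x₀ R, ‖Φ x‖ ≤ ‖Φ x₀‖ + K * R := fun x hx => by
    calc ‖Φ x‖ ≤ ‖Φ x - Φ x₀‖ + ‖Φ x₀‖ := norm_le_norm_sub_add _ _
      _ ≤ K * ‖x - x₀‖ + ‖Φ x₀‖ := by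
        gcongr; exact hΦR.norm_sub_le hx (mem_closedBall_self hR.le)
      _ ≤ ‖Φ x₀‖ + K * R := by rw [add_comm]; gcongr; exact mem_closedBall_iff_norm.1 hx
  apply exists_pos_hasDerivAt_and_eqOn_of_lipschitzOnWith (T := 1) (R := ⟨R, hR.le⟩)
    (C := ((‖Φ x₀‖ + K * R) * Cw).toNNReal) (K := K * Cw.toNNReal) one_pos hR
  · intro t ht
    refine LipschitzOnWith.of_dist_le_mul fun x hx y hy => ?_
    simp only [hF, dist_eq_norm, ← Matrix.sub_mulVec]
    calc ‖(Φ x - Φ y) *ᵥ w t‖ ≤ ‖Φ x - Φ y‖ * ‖w t‖ := Matrix.linfty_opNorm_mulVec _ _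
      _ ≤ K * ‖x - y‖ * Cw := by
        gcongr
        · exact hΦR.norm_sub_le hx hy
        · exact hCw t ht
      _ ≤ K * Cw.toNNReal * ‖x - y‖ := by
        rw [mul_right_comm]; gcongr; exact Real.le_coe_toNNReal Cw
  · intro x _
    simp only [hF]
    exact (continuous_const.matrix_mulVec hw).continuousOn
  · intro t ht x hx
    rw [hF]
    calc ‖Φ x *ᵥ w t‖ ≤ ‖Φ x‖ * ‖w t‖ := Matrix.linfty_opNorm_mulVec _ _
      _ ≤ (‖Φ x₀‖ + K * R) * Cw := by gcongr; exacts [hΦbound x hx, hCw t ht]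
      _ ≤ _ := Real.le_coe_toNNReal _

noncomputable def trackingMatrix (a b c : ℝ × ℝ → EuclideanSpace ℝ (Fin 3)) (x : Fin 3 → ℝ)
    (A : Matrix (Fin 2) (Fin 2) ℝ) : Matrix (Fin 3) (Fin 3) ℝ :=
  blockDiag2 (1 - x 2 • A)⁻¹ * (frameMat (a (x 0, x 1)) (b (x 0, x 1)) (c (x 0, x 1)))⁻¹

theorem contDiffAt_trackingMatrix {a b c : ℝ × ℝ → EuclideanSpace ℝ (Fin 3)}
    (ha : ContDiff ℝ 1 a) (hb : ContDiff ℝ 1 b) (hc : ContDiff ℝ 1 c)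
    {x₀ : Fin 3 → ℝ} {A₀ : Fin 2 → Fin 2 → ℝ} (hA₀ : (1 - x₀ 2 • Matrix.of A₀).det ≠ 0)
    (hframe : (frameMat (a (x₀ 0, x₀ 1)) (b (x₀ 0, x₀ 1)) (c (x₀ 0, x₀ 1))).det ≠ 0) :
    ContDiffAt ℝ 1 (fun xA : (Fin 3 → ℝ) × (Fin 2 → Fin 2 → ℝ) =>
      trackingMatrix a b c xA.1 (Matrix.of xA.2)) (x₀, A₀) := by
  have hblock : ContDiffAt ℝ 1 (fun xA : (Fin 3 → ℝ) × (Fin 2 → Fin 2 → ℝ) =>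
      1 - xA.1 2 • Matrix.of xA.2) (x₀, A₀) := by
    rw [contDiffAt_matrix_iff]
    intro i j
    simp only [Matrix.sub_apply, Matrix.smul_apply, Matrix.of_apply, smul_eq_mul]
    fun_prop
  have hpoint : ContDiffAt ℝ 1 (fun xA : (Fin 3 → ℝ) × (Fin 2 → Fin 2 → ℝ) =>
      (xA.1 0, xA.1 1)) (x₀, A₀) := by fun_prop
  exact (hblock.matrix_inv hA₀).blockDiag2.mul
    (((ha.contDiffAt.frameMat hb.contDiffAt hc.contDiffAt).comp _ hpoint).matrix_inv hframe)

theorem tracking_ode_exists_unique_general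
    (σ : ℝ × ℝ → EuclideanSpace ℝ (Fin 3)) (hσ : ContDiff ℝ 2 σ)
    (σu σv : ℝ × ℝ → EuclideanSpace ℝ (Fin 3))
    (hσu : ∀ p : ℝ × ℝ, HasDerivAt (fun x => σ (x, p.2)) (σu p) p.1)
    (hσv : ∀ p : ℝ × ℝ, HasDerivAt (fun y => σ (p.1, y)) (σv p) p.2)
    (hindep : ∀ p, LinearIndependent ℝ ![σu p, σv p])
    (n : ℝ × ℝ → EuclideanSpace ℝ (Fin 3))
    (hn : ∀ p, n p = ‖cross3 (σu p) (σv p)‖⁻¹ • cross3 (σu p) (σv p))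
    (W : ℝ × ℝ → Matrix (Fin 2) (Fin 2) ℝ)
    (L : ℝ)
    (hWLip : ∀ p q : ℝ × ℝ, ∀ i j, |W p i j - W q i j| ≤ L * dist p q)
    (heig : ∀ p, ∀ μ : ℝ, ∀ x : Fin 2 → ℝ, x ≠ 0 → (-(W p)).mulVec x = μ • x → 0 ≤ μ)
    (c : ℝ → EuclideanSpace ℝ (Fin 3)) (hc : ContDiff ℝ 1 c)
    (F : ℝ → (Fin 3 → ℝ) → (Fin 3 → ℝ))
    (hF : ∀ t x, F t x
      = (blockDiag2 (1 - x 2 • W (x 0, x 1))⁻¹).mulVec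
          ((frameMat (σu (x 0, x 1)) (σv (x 0, x 1)) (n (x 0, x 1)))⁻¹.mulVec
            ((EuclideanSpace.equiv (Fin 3) ℝ) (deriv c t))))
    (u₀ v₀ r₀ : ℝ) (hr₀ : 0 < r₀) :
    ∃ ε > (0 : ℝ),
      (∃ f : ℝ → (Fin 3 → ℝ), f 0 = ![u₀, v₀, r₀] ∧
        ∀ t ∈ Set.Ioo (-ε) ε, HasDerivAt f (F t (f t)) t) ∧
      ∀ f g : ℝ → (Fin 3 → ℝ), f 0 = ![u₀, v₀, r₀] → g 0 = ![u₀, v₀, r₀] →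
        (∀ t ∈ Set.Ioo (-ε) ε, HasDerivAt f (F t (f t)) t) →
        (∀ t ∈ Set.Ioo (-ε) ε, HasDerivAt g (F t (g t)) t) →
        Set.EqOn f g (Set.Ioo (-ε) ε) := by
  have hσu' : ContDiff ℝ 1 σu := contDiff_of_hasDerivAt_fst hσ (by norm_num) hσu
  have hσv' : ContDiff ℝ 1 σv := contDiff_of_hasDerivAt_snd hσ (by norm_num) hσv
  have hn' : ContDiff ℝ 1 n := funext hn ▸ hσu'.normalize_cross3 hσv' hindep
  have hWq : LipschitzWith L.toNNReal fun x : Fin 3 → ℝ => Matrix.of.symm (W (x 0, x 1)) := by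
    simpa [Function.comp_def] using (lipschitzWith_ofSymm_of_abs_sub_le hWLip).comp
      ((LipschitzWith.eval (α := fun _ : Fin 3 => ℝ) 0).prodMk (LipschitzWith.eval 1))
  have hg := contDiffAt_trackingMatrix hσu' hσv' hn' (x₀ := ![u₀, v₀, r₀])
    (A₀ := Matrix.of.symm (W (u₀, v₀))) (by simpa using det_one_sub_smul_ne_zero hr₀ (heig _))
    (by simpa [hn, det_frameMat_normalize_cross3] using cross3_ne_zero (hindep _))
  refine exists_pos_hasDerivAt_and_eqOn_of_mulVec (exists_lipschitzOnWith_comp_prodMk hg hWq)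
    ((EuclideanSpace.equiv (Fin 3) ℝ).continuous.comp (hc.continuous_deriv le_rfl)) ?_
  intro t x
  simp [hF, trackingMatrix, Matrix.mulVec_mulVec]

/-- Local existence and uniqueness for the tracking differential equation
`(u̇, v̇, ṙ)ᵀ = diag((I − rW)⁻¹, −1) Σ⁻¹ ċ` when the Weingarten matrix `W` is Lipschitz,
`−W` has nonnegative eigenvalues, and `c` is continuously differentiable. -/
theorem tracking_ode_exists_unique
    (σ : ℝ × ℝ → EuclideanSpace ℝ (Fin 3)) (hσ : ContDiff ℝ 2 σ)
    (σu σv : ℝ × ℝ → EuclideanSpace ℝ (Fin 3))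
    (hσu : ∀ p : ℝ × ℝ, HasDerivAt (fun x => σ (x, p.2)) (σu p) p.1)
    (hσv : ∀ p : ℝ × ℝ, HasDerivAt (fun y => σ (p.1, y)) (σv p) p.2)
    (hindep : ∀ p, LinearIndependent ℝ ![σu p, σv p])
    (n : ℝ × ℝ → EuclideanSpace ℝ (Fin 3))
    (hn : ∀ p, n p = ‖cross3 (σu p) (σv p)‖⁻¹ • cross3 (σu p) (σv p))
    (nu nv : ℝ × ℝ → EuclideanSpace ℝ (Fin 3))
    (hnu : ∀ p : ℝ × ℝ, HasDerivAt (fun x => n (x, p.2)) (nu p) p.1)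
    (hnv : ∀ p : ℝ × ℝ, HasDerivAt (fun y => n (p.1, y)) (nv p) p.2)
    (W : ℝ × ℝ → Matrix (Fin 2) (Fin 2) ℝ)
    (hW1 : ∀ p, nu p = W p 0 0 • σu p + W p 1 0 • σv p)
    (hW2 : ∀ p, nv p = W p 0 1 • σu p + W p 1 1 • σv p)
    (L : ℝ)
    (hWLip : ∀ p q : ℝ × ℝ, ∀ i j, |W p i j - W q i j| ≤ L * dist p q)
    (heig : ∀ p, ∀ μ : ℝ, ∀ x : Fin 2 → ℝ, x ≠ 0 → (-(W p)).mulVec x = μ • x → 0 ≤ μ)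
    (c : ℝ → EuclideanSpace ℝ (Fin 3)) (hc : ContDiff ℝ 1 c)
    (F : ℝ → (Fin 3 → ℝ) → (Fin 3 → ℝ))
    (hF : ∀ t x, F t x
      = (blockDiag2 (1 - x 2 • W (x 0, x 1))⁻¹).mulVec
          ((frameMat (σu (x 0, x 1)) (σv (x 0, x 1)) (n (x 0, x 1)))⁻¹.mulVec
            ((EuclideanSpace.equiv (Fin 3) ℝ) (deriv c t))))
    (u₀ v₀ r₀ : ℝ) (hr₀ : 0 < r₀) :
    ∃ ε > (0 : ℝ),
      (∃ f : ℝ → (Fin 3 → ℝ), f 0 = ![u₀, v₀, r₀] ∧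
        ∀ t ∈ Set.Ioo (-ε) ε, HasDerivAt f (F t (f t)) t) ∧
      ∀ f g : ℝ → (Fin 3 → ℝ), f 0 = ![u₀, v₀, r₀] → g 0 = ![u₀, v₀, r₀] →
        (∀ t ∈ Set.Ioo (-ε) ε, HasDerivAt f (F t (f t)) t) →
        (∀ t ∈ Set.Ioo (-ε) ε, HasDerivAt g (F t (g t)) t) →
        Set.EqOn f g (Set.Ioo (-ε) ε) :=
  tracking_ode_exists_unique_general σ hσ σu σv hσu hσv hindep n hn W L hWLip heig c hc F hF u₀ v₀
    r₀ hr₀
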